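/- arXiv:2203.00642 — 5 statements merged into one kernel-verified Lean document; each statement's English description precedes it below -/
import Mathlib

section
/- Soundness of the weak model's brk1 axiom (Theorem 3, brk1 case): Suppose the ordered-before relation ob satisfies the following strong-model clauses: (i) [DSB]; po ⊆ ob; (ii) [TLBI]; po; [DSB] ⊆ ob; (iii) wco ⊆ ob; (iv) for every Stage-1 translation read g ∈ T ∩ Stage1 that is tlb_barriered by a Stage-1 TLBI event d with ext g d, one has ob g d, and moreover ob f d for every explicit memory event f ∈ M with iio g f; and (v) wco relates every write to every TLBI event one way or the other (for b ∈ W and d ∈ TLBI, wco b d or wco d b). Then for any events a ∈ W, b ∈ W_inv, c ∈ DSB, d ∈ TLBI_S1, e ∈ DSB, f ∈ M, g ∈ T ∩ Stage1 satisfying co a b, ob b c, po c d, po d e, ob e f, iio g f, tlb_affects d g, ext g d, and trf a g, the relation ob has a cycle: there is an event x with Relation.TransGen ob x x. Hence no execution consistent in the strong model (ob acyclic) exhibits the brk1 pattern, validating the weak model's brk1 axiom. -/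
/-- Soundness of the weak model's brk1 axiom (Theorem 3, brk1 case): in any
candidate execution whose ordered-before relation `ob` satisfies the listed
strong-model clauses, the brk1 pattern forces a cycle in `ob`. -/
theorem brk1_sound {E : Type*}
    (W W_inv DSB TLBI_S1 TLBI_S2 M T Stage1 : Set E)
    (co po iio trf tlb_affects ext wco ob : E → E → Prop)
    (hW_inv_sub : W_inv ⊆ W)
    -- derived relations
    (tfr : E → E → Prop)
    (htfr : ∀ g b, tfr g b ↔ ∃ a, a ∈ W ∧ trf a g ∧ co a b)
    (tlb_barriered : E → E → Prop)
    (hbarriered : ∀ g d, tlb_barriered g d ↔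
      ∃ b, b ∈ W ∧ tfr g b ∧ wco b d ∧ tlb_affects d g)
    -- strong-model clauses
    (h_dsb_po : ∀ x y, x ∈ DSB → po x y → ob x y)
    (h_tlbi_po_dsb : ∀ x y, x ∈ TLBI_S1 ∪ TLBI_S2 → po x y → y ∈ DSB → ob x y)
    (h_wco : ∀ x y, wco x y → ob x y)
    (h_obtlbi : ∀ g d, g ∈ T ∩ Stage1 → d ∈ TLBI_S1 → tlb_barriered g d →
      ext g d → ob g d ∧ ∀ f, f ∈ M → iio g f → ob f d)
    (h_wco_total : ∀ b d, b ∈ W → d ∈ TLBI_S1 ∪ TLBI_S2 → wco b d ∨ wco d b)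
    -- the brk1 pattern
    (a b c d e f g : E)
    (ha : a ∈ W) (hb : b ∈ W_inv) (hc : c ∈ DSB) (hd : d ∈ TLBI_S1)
    (he : e ∈ DSB) (hf : f ∈ M) (hg : g ∈ T ∩ Stage1)
    (h_co_ab : co a b) (h_ob_bc : ob b c) (h_po_cd : po c d)
    (h_po_de : po d e) (h_ob_ef : ob e f) (h_iio_gf : iio g f)
    (h_aff : tlb_affects d g) (h_ext : ext g d) (h_trf : trf a g) :
    ∃ x, Relation.TransGen ob x x := by
  rcases h_wco_total b d (hW_inv_sub hb) (Or.inl hd) with hbd | hdb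
  · have hbar : tlb_barriered g d := (hbarriered g d).mpr
      ⟨b, hW_inv_sub hb, (htfr g b).mpr ⟨a, ha, h_trf, h_co_ab⟩, hbd, h_aff⟩
    have hfd := (h_obtlbi g d hg hd hbar h_ext).2 f hf h_iio_gf
    exact ⟨d, .head (h_tlbi_po_dsb d e (Or.inl hd) h_po_de he)
      (.tail (.single h_ob_ef) hfd)⟩
  · exact ⟨b, .head h_ob_bc (.tail (.single (h_dsb_po c d hc h_po_cd))
      (h_wco d b hdb))⟩
end

section
/- Soundness of the weak model's brk2 axiom (Theorem 3, brk2 case): Suppose the ordered-before relation ob satisfies the following strong-model clauses: (i) [DSB]; po ⊆ ob; (ii) [TLBI]; po; [DSB] ⊆ ob; (iii) [CSE]; io ⊆ ob; (iv) wco ⊆ ob; (v) for every Stage-1 translation read g ∈ T ∩ Stage1 that is tlb_barriered by a Stage-1 TLBI event d, one has ob g d; and (vi) wco relates every write to every TLBI event one way or the other (for b ∈ W and d ∈ TLBI, wco b d or wco d b). Then for any events a ∈ W, b ∈ W_inv, c ∈ DSB, d ∈ TLBI_S1, e ∈ DSB, f ∈ CSE, g ∈ T ∩ Stage1 satisfying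 co a b, ob b c, po c d, po d e, ob e f, io f g, tlb_affects d g, and trf a g, the relation ob has a cycle: there is an event x with Relation.TransGen ob x x. Hence no execution consistent in the strong model (ob acyclic) exhibits the brk2 pattern, validating the weak model's brk2 axiom. -/
/-- Soundness of the weak model's brk2 axiom (Theorem 3, brk2 case): in any
candidate execution whose ordered-before relation `ob` satisfies the listed
strong-model clauses, the brk2 pattern forces a cycle in `ob`. -/
theorem brk2_sound {E : Type*}
    (W W_inv DSB TLBI_S1 TLBI_S2 CSE T Stage1 : Set E)
    (co po io trf tlb_affects wco ob : E → E → Prop)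
    (hW_inv_sub : W_inv ⊆ W)
    -- derived relations
    (tfr : E → E → Prop)
    (htfr : ∀ g b, tfr g b ↔ ∃ a, a ∈ W ∧ trf a g ∧ co a b)
    (tlb_barriered : E → E → Prop)
    (hbarriered : ∀ g d, tlb_barriered g d ↔
      ∃ b, b ∈ W ∧ tfr g b ∧ wco b d ∧ tlb_affects d g)
    -- strong-model clauses
    (h_dsb_po : ∀ x y, x ∈ DSB → po x y → ob x y)
    (h_tlbi_po_dsb : ∀ x y, x ∈ TLBI_S1 ∪ TLBI_S2 → po x y → y ∈ DSB → ob x y)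
    (h_cse_io : ∀ x y, x ∈ CSE → io x y → ob x y)
    (h_wco : ∀ x y, wco x y → ob x y)
    (h_obtlbi : ∀ g d, g ∈ T ∩ Stage1 → d ∈ TLBI_S1 → tlb_barriered g d →
      ob g d)
    (h_wco_total : ∀ b d, b ∈ W → d ∈ TLBI_S1 ∪ TLBI_S2 → wco b d ∨ wco d b)
    -- the brk2 pattern
    (a b c d e f g : E)
    (ha : a ∈ W) (hb : b ∈ W_inv) (hc : c ∈ DSB) (hd : d ∈ TLBI_S1)
    (he : e ∈ DSB) (hf : f ∈ CSE) (hg : g ∈ T ∩ Stage1)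
    (h_co_ab : co a b) (h_ob_bc : ob b c) (h_po_cd : po c d)
    (h_po_de : po d e) (h_ob_ef : ob e f) (h_io_fg : io f g)
    (h_aff : tlb_affects d g) (h_trf : trf a g) :
    ∃ x, Relation.TransGen ob x x := by
  have hcd : ob c d := h_dsb_po c d hc h_po_cd
  have hde : ob d e := h_tlbi_po_dsb d e (Or.inl hd) h_po_de he
  have hfg : ob f g := h_cse_io f g hf h_io_fg
  rcases h_wco_total b d (hW_inv_sub hb) (Or.inl hd) with hbd | hdb
  · have hgd : ob g d := h_obtlbi g d hg hd
      ((hbarriered g d).2 ⟨b, hW_inv_sub hb, (htfr g b).2 ⟨a, ha, h_trf, h_co_ab⟩, hbd, h_aff⟩)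
    exact ⟨d, .head hde (.head h_ob_ef (.head hfg (.single hgd)))⟩
  · exact ⟨b, .head h_ob_bc (.head hcd (.single (h_wco d b hdb)))⟩
end

section
/- Soundness of the weak model's bbms2 axiom, non-BBM-violation subcase (Theorem 3, bbms2 case with the Stage-1 TLBI wco-before the valid write): Suppose the ordered-before relation ob satisfies the strong-model clauses (i) [CSE]; io ⊆ ob and (ii) [T_f]; tfr ⊆ ob (a faulting translation read is ordered before every write that is a coherence-successor of the write it translate-reads from). Then for any events a ∈ W, b ∈ W_valid, c ∈ CSE, d ∈ T_f ∩ Stage2, and h ∈ TLBI_S1 satisfying co a b, ob b c, io c d, trf a d, and wco h b, the relation ob has a cycle: there is an event x with Relation.TransGen ob x x. Hence no execution consistent in the strong model (ob acyclic) exhibits this instance of the bbms2 pattern. -/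
/-- Soundness of the weak model's bbms2 axiom, non-BBM-violation subcase
(Theorem 3, bbms2 case with the Stage-1 TLBI wco-before the valid write): the
pattern forces a cycle in `ob`. -/
theorem bbms2_sound_non_violation {E : Type*}
    (W W_valid CSE TLBI_S1 T_f Stage2 : Set E)
    (co io trf wco ob : E → E → Prop)
    (hW_valid_sub : W_valid ⊆ W)
    -- derived relation
    (tfr : E → E → Prop)
    (htfr : ∀ g b, tfr g b ↔ ∃ a, a ∈ W ∧ trf a g ∧ co a b)
    -- strong-model clauses
    (h_cse_io : ∀ x y, x ∈ CSE → io x y → ob x y)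
    (h_tf_tfr : ∀ g b, g ∈ T_f → tfr g b → ob g b)
    -- the pattern
    (a b c d h : E)
    (ha : a ∈ W) (hb : b ∈ W_valid) (hc : c ∈ CSE) (hd : d ∈ T_f ∩ Stage2)
    (hh : h ∈ TLBI_S1)
    (h_co_ab : co a b) (h_ob_bc : ob b c) (h_io_cd : io c d)
    (h_trf_ad : trf a d) (h_wco_hb : wco h b) :
    ∃ x, Relation.TransGen ob x x := by
  refine ⟨b, ?_⟩
  have h1 : ob c d := h_cse_io c d hc h_io_cd
  have h2 : ob d b := h_tf_tfr d b hd.1 ((htfr d b).2 ⟨a, ha, h_trf_ad, h_co_ab⟩)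
  exact (Relation.TransGen.single h_ob_bc).tail h1 |>.tail h2
end

section
/- Soundness of the weak model's brk1s2 axiom (Theorem 3, brk1s2 case): Suppose the ordered-before relation ob satisfies the following strong-model clauses: (i) [DSB]; po ⊆ ob; (ii) [TLBI]; po; [DSB] ⊆ ob; (iii) wco ⊆ ob; (iv) wco is transitive and relates any two distinct events among the writes and TLBI events (totality); (v) for every Stage-2 translation read j ∈ T ∩ Stage2 that is tlb_barriered by a Stage-2 TLBI event d, if the Stage-1 translation read i of the same translation-table walk (with iio i j) translate-reads from a write k with wco d k, then ob h d for every explicit memory event h ∈ M of the same instruction (with iio j h); and (vi) for every such j tlb_barriered by d, if maybe_TLB_cached i f holds for the Stage-1 read i and a Stage-1 TLBI f, then ob h f for every explicit memory event h ∈ M with iio j h. Then for any events a ∈ W, b ∈ W_inv, c ∈ DSB, d ∈ TLBI_S2, e ∈ DSB, f ∈ TLBI_S1, g ∈ DSB, h ∈ M, i ∈ T ∩ Stage1, j ∈ T ∩ Stage2, and k ∈ W satisfying co a b, ob b c, po c d, po d e, po e f, po f g, ob g h, iio i h, iio i j, iio j h, tlb_affects d j, tlb_affects f i, trf a j, and trf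 k i, the relation ob has a cycle: there is an event x with Relation.TransGen ob x x. Hence no execution consistent in the strong model (ob acyclic) exhibits the brk1s2 pattern. -/
/-- Soundness of the weak model's brk1s2 axiom (Theorem 3, brk1s2 case): in
any candidate execution whose ordered-before relation `ob` satisfies the
listed strong-model clauses, the brk1s2 pattern forces a cycle in `ob`. -/
theorem brk1s2_sound {E : Type*}
    (W W_inv DSB TLBI_S1 TLBI_S2 M T Stage1 Stage2 : Set E)
    (co po iio trf tlb_affects wco ob : E → E → Prop)
    (hW_inv_sub : W_inv ⊆ W)
    -- derived relations
    (tfr : E → E → Prop)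
    (htfr : ∀ g b, tfr g b ↔ ∃ a, a ∈ W ∧ trf a g ∧ co a b)
    (tlb_barriered : E → E → Prop)
    (hbarriered : ∀ g d, tlb_barriered g d ↔
      ∃ b, b ∈ W ∧ tfr g b ∧ wco b d ∧ tlb_affects d g)
    (maybe_TLB_cached : E → E → Prop)
    (hcached : ∀ i f, maybe_TLB_cached i f ↔ ∃ k, k ∈ W ∧ trf k i ∧ wco k f)
    -- strong-model clauses
    (h_dsb_po : ∀ x y, x ∈ DSB → po x y → ob x y)
    (h_tlbi_po_dsb : ∀ x y, x ∈ TLBI_S1 ∪ TLBI_S2 → po x y → y ∈ DSB → ob x y)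
    (h_wco : ∀ x y, wco x y → ob x y)
    (h_wco_trans : Transitive wco)
    (h_wco_total : ∀ x y, x ∈ W ∪ (TLBI_S1 ∪ TLBI_S2) →
      y ∈ W ∪ (TLBI_S1 ∪ TLBI_S2) → x ≠ y → wco x y ∨ wco y x)
    (h_obtlbi_newer : ∀ j d i k h, j ∈ T ∩ Stage2 → d ∈ TLBI_S2 →
      tlb_barriered j d → i ∈ T ∩ Stage1 → iio i j → k ∈ W → trf k i →
      wco d k → h ∈ M → iio j h → ob h d)
    (h_obtlbi_cached : ∀ j d i f h, j ∈ T ∩ Stage2 → d ∈ TLBI_S2 →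
      tlb_barriered j d → i ∈ T ∩ Stage1 → iio i j → f ∈ TLBI_S1 →
      maybe_TLB_cached i f → h ∈ M → iio j h → ob h f)
    -- the brk1s2 pattern
    (a b c d e f g h i j k : E)
    (ha : a ∈ W) (hb : b ∈ W_inv) (hc : c ∈ DSB) (hd : d ∈ TLBI_S2)
    (he : e ∈ DSB) (hf : f ∈ TLBI_S1) (hg : g ∈ DSB) (hh : h ∈ M)
    (hi : i ∈ T ∩ Stage1) (hj : j ∈ T ∩ Stage2) (hk : k ∈ W)
    (h_co_ab : co a b) (h_ob_bc : ob b c) (h_po_cd : po c d)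
    (h_po_de : po d e) (h_po_ef : po e f) (h_po_fg : po f g)
    (h_ob_gh : ob g h) (h_iio_ih : iio i h) (h_iio_ij : iio i j)
    (h_iio_jh : iio j h) (h_aff_dj : tlb_affects d j)
    (h_aff_fi : tlb_affects f i) (h_trf_aj : trf a j) (h_trf_ki : trf k i) :
    ∃ x, Relation.TransGen ob x x := by
  have hbW : b ∈ W := hW_inv_sub hb
  have ob_cd : ob c d := h_dsb_po c d hc h_po_cd
  have ob_de : ob d e := h_tlbi_po_dsb d e (Or.inr hd) h_po_de he
  have ob_ef : ob e f := h_dsb_po e f he h_po_ef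
  have ob_fg : ob f g := h_tlbi_po_dsb f g (Or.inl hf) h_po_fg hg
  by_cases hbd : b = d
  · subst hbd
    exact ⟨b, Relation.TransGen.head h_ob_bc (Relation.TransGen.single ob_cd)⟩
  rcases h_wco_total b d (Or.inl hbW) (Or.inr (Or.inr hd)) hbd with hwbd | hwdb
  · have hbarr : tlb_barriered j d := (hbarriered j d).2
      ⟨b, hbW, (htfr j b).2 ⟨a, ha, h_trf_aj, h_co_ab⟩, hwbd, h_aff_dj⟩
    have finish : wco k f → ∃ x, Relation.TransGen ob x x := fun hwkf =>
      ⟨f, Relation.TransGen.head ob_fg (Relation.TransGen.head h_ob_gh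
        (Relation.TransGen.single (h_obtlbi_cached j d i f h hj hd hbarr hi
          h_iio_ij hf ((hcached i f).2 ⟨k, hk, h_trf_ki, hwkf⟩) hh h_iio_jh)))⟩
    have dfcase : (wco k d ∨ k = d) → ∃ x, Relation.TransGen ob x x := by
      intro hkd
      by_cases hdf : d = f
      · subst hdf
        exact ⟨d, Relation.TransGen.head ob_de (Relation.TransGen.single ob_ef)⟩
      rcases h_wco_total d f (Or.inr (Or.inr hd)) (Or.inr (Or.inl hf)) hdf with hwdf | hwfd
      · rcases hkd with hwkd | rfl
        · exact finish (h_wco_trans hwkd hwdf)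
        · exact finish hwdf
      · exact ⟨d, Relation.TransGen.head ob_de (Relation.TransGen.head ob_ef
          (Relation.TransGen.single (h_wco f d hwfd)))⟩
    by_cases hdk : d = k
    · exact dfcase (Or.inr hdk.symm)
    rcases h_wco_total d k (Or.inr (Or.inr hd)) (Or.inl hk) hdk with hwdk | hwkd
    · have obhd := h_obtlbi_newer j d i k h hj hd hbarr hi h_iio_ij hk h_trf_ki hwdk hh h_iio_jh
      exact ⟨d, Relation.TransGen.head ob_de (Relation.TransGen.head ob_ef
        (Relation.TransGen.head ob_fg (Relation.TransGen.head h_ob_gh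
          (Relation.TransGen.single obhd))))⟩
    · exact dfcase (Or.inl hwkd)
  · exact ⟨b, Relation.TransGen.head h_ob_bc (Relation.TransGen.head ob_cd
      (Relation.TransGen.single (h_wco d b hwdb)))⟩
end

section
/- Soundness of the weak model's brk2s2 axiom (Theorem 3, brk2s2 case): Suppose the ordered-before relation ob satisfies the following strong-model clauses: (i) [DSB]; po ⊆ ob; (ii) [TLBI]; po; [DSB] ⊆ ob; (iii) [CSE]; io ⊆ ob and io absorbs iio on the right (io x y and iio y z imply io x z); (iv) wco ⊆ ob; (v) wco is transitive and relates any two distinct events among the writes and TLBI events (totality); (vi) for every Stage-2 translation read j ∈ T ∩ Stage2 that is tlb_barriered by a Stage-2 TLBI event d, if the Stage-1 translation read i of the same translation-table walk (with iio i j) translate-reads from a write k with wco d k, then ob j d; and (vii) for every such j tlb_barriered by d, if maybe_TLB_cached i f holds for the Stage-1 read i and a Stage-1 TLBI f, then ob j f. Then for any events a ∈ W, b ∈ W_inv, c ∈ DSB, d ∈ TLBI_S2, e ∈ DSB, f ∈ TLBI_S1, g ∈ DSB, h ∈ CSE, i ∈ T ∩ Stage1, j ∈ T ∩ Stage2, and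 k ∈ W satisfying co a b, ob b c, po c d, po d e, po e f, po f g, ob g h, io h i, iio i j, tlb_affects d j, tlb_affects f i, trf a j, and trf k i, the relation ob has a cycle: there is an event x with Relation.TransGen ob x x. Hence no execution consistent in the strong model (ob acyclic) exhibits the brk2s2 pattern. -/
/-- Soundness of the weak model's brk2s2 axiom (Theorem 3, brk2s2 case): in
any candidate execution whose ordered-before relation `ob` satisfies the
listed strong-model clauses, the brk2s2 pattern forces a cycle in `ob`. -/
theorem brk2s2_sound {E : Type*}
    (W W_inv DSB TLBI_S1 TLBI_S2 CSE T Stage1 Stage2 : Set E)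
    (co po io iio trf tlb_affects wco ob : E → E → Prop)
    (hW_inv_sub : W_inv ⊆ W)
    -- derived relations
    (tfr : E → E → Prop)
    (htfr : ∀ g b, tfr g b ↔ ∃ a, a ∈ W ∧ trf a g ∧ co a b)
    (tlb_barriered : E → E → Prop)
    (hbarriered : ∀ g d, tlb_barriered g d ↔
      ∃ b, b ∈ W ∧ tfr g b ∧ wco b d ∧ tlb_affects d g)
    (maybe_TLB_cached : E → E → Prop)
    (hcached : ∀ i f, maybe_TLB_cached i f ↔ ∃ k, k ∈ W ∧ trf k i ∧ wco k f)
    -- strong-model clauses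
    (h_dsb_po : ∀ x y, x ∈ DSB → po x y → ob x y)
    (h_tlbi_po_dsb : ∀ x y, x ∈ TLBI_S1 ∪ TLBI_S2 → po x y → y ∈ DSB → ob x y)
    (h_cse_io : ∀ x y, x ∈ CSE → io x y → ob x y)
    (h_io_iio : ∀ x y z, io x y → iio y z → io x z)
    (h_wco : ∀ x y, wco x y → ob x y)
    (h_wco_trans : Transitive wco)
    (h_wco_total : ∀ x y, x ∈ W ∪ (TLBI_S1 ∪ TLBI_S2) →
      y ∈ W ∪ (TLBI_S1 ∪ TLBI_S2) → x ≠ y → wco x y ∨ wco y x)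
    (h_obtlbi_newer : ∀ j d i k, j ∈ T ∩ Stage2 → d ∈ TLBI_S2 →
      tlb_barriered j d → i ∈ T ∩ Stage1 → iio i j → k ∈ W → trf k i →
      wco d k → ob j d)
    (h_obtlbi_cached : ∀ j d i f, j ∈ T ∩ Stage2 → d ∈ TLBI_S2 →
      tlb_barriered j d → i ∈ T ∩ Stage1 → iio i j → f ∈ TLBI_S1 →
      maybe_TLB_cached i f → ob j f)
    -- the brk2s2 pattern
    (a b c d e f g h i j k : E)
    (ha : a ∈ W) (hb : b ∈ W_inv) (hc : c ∈ DSB) (hd : d ∈ TLBI_S2)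
    (he : e ∈ DSB) (hf : f ∈ TLBI_S1) (hg : g ∈ DSB) (hh : h ∈ CSE)
    (hi : i ∈ T ∩ Stage1) (hj : j ∈ T ∩ Stage2) (hk : k ∈ W)
    (h_co_ab : co a b) (h_ob_bc : ob b c) (h_po_cd : po c d)
    (h_po_de : po d e) (h_po_ef : po e f) (h_po_fg : po f g)
    (h_ob_gh : ob g h) (h_io_hi : io h i) (h_iio_ij : iio i j)
    (h_aff_dj : tlb_affects d j) (h_aff_fi : tlb_affects f i)
    (h_trf_aj : trf a j) (h_trf_ki : trf k i) :
    ∃ x, Relation.TransGen ob x x := by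
  have ob_cd : ob c d := h_dsb_po c d hc h_po_cd
  have ob_de : ob d e := h_tlbi_po_dsb d e (Or.inr hd) h_po_de he
  have ob_ef : ob e f := h_dsb_po e f he h_po_ef
  have ob_fg : ob f g := h_tlbi_po_dsb f g (Or.inl hf) h_po_fg hg
  have ob_hj : ob h j := h_cse_io h j hh (h_io_iio h i j h_io_hi h_iio_ij)
  have hbW : b ∈ W ∪ (TLBI_S1 ∪ TLBI_S2) := Or.inl (hW_inv_sub hb)
  have hdT : d ∈ W ∪ (TLBI_S1 ∪ TLBI_S2) := Or.inr (Or.inr hd)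
  have hfT : f ∈ W ∪ (TLBI_S1 ∪ TLBI_S2) := Or.inr (Or.inl hf)
  have hkW : k ∈ W ∪ (TLBI_S1 ∪ TLBI_S2) := Or.inl hk
  -- cycle f → g → h → j → f
  have cycF : ob j f → ∃ x, Relation.TransGen ob x x := fun hjf =>
    ⟨f, Relation.TransGen.tail
      (Relation.TransGen.tail
        (Relation.TransGen.single ob_fg) h_ob_gh) ob_hj |>.tail hjf⟩
  -- cycle d → e → f → g → h → j → d
  have cycD : ob j d → ∃ x, Relation.TransGen ob x x := fun hjd =>
    ⟨d, (((((Relation.TransGen.single ob_de).tail ob_ef).tail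
      ob_fg).tail h_ob_gh).tail ob_hj).tail hjd⟩
  by_cases hbd : b = d
  · subst hbd
    exact ⟨b, (Relation.TransGen.single h_ob_bc).tail ob_cd⟩
  rcases h_wco_total b d hbW hdT hbd with hwbd | hwdb
  swap
  · exact ⟨b, ((Relation.TransGen.single h_ob_bc).tail ob_cd).tail
      (h_wco d b hwdb)⟩
  have hbarr : tlb_barriered j d := by
    rw [hbarriered]
    exact ⟨b, hW_inv_sub hb, (htfr j b).2 ⟨a, ha, h_trf_aj, h_co_ab⟩,
      hwbd, h_aff_dj⟩
  by_cases hdf : d = f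
  · subst hdf
    exact ⟨e, (Relation.TransGen.single ob_ef).tail ob_de⟩
  rcases h_wco_total d f hdT hfT hdf with hwdf | hwfd
  swap
  · exact ⟨d, ((Relation.TransGen.single ob_de).tail ob_ef).tail
      (h_wco f d hwfd)⟩
  by_cases hkd : k = d
  · exact cycF (h_obtlbi_cached j d i f hj hd hbarr hi h_iio_ij hf
      ((hcached i f).2 ⟨k, hk, h_trf_ki, by rw [hkd]; exact hwdf⟩))
  rcases h_wco_total k d hkW hdT hkd with hwkd | hwdk
  · exact cycF (h_obtlbi_cached j d i f hj hd hbarr hi h_iio_ij hf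
      ((hcached i f).2 ⟨k, hk, h_trf_ki, h_wco_trans hwkd hwdf⟩))
  · exact cycD (h_obtlbi_newer j d i k hj hd hbarr hi h_iio_ij hk
      h_trf_ki hwdk)
end
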